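/- A partition λ = (α_1−1, …, α_p−1 | α_1, …, α_p) in Frobenius notation (with α_1 > ⋯ > α_p > 0) is an even partition (all parts even) if and only if p is even, α_1, α_3, …, α_{p−1} are all even, and α_{2i−1} − α_{2i} = 1 for all i = 1,…,p/2. -/

import Mathlib

/-!
All rows of a Young diagram are even exactly when its columns come in equal pairs
`colLen (2j+1) = colLen (2j)`: a row of odd length `2j+1` sits exactly where column `2j+1` is
shorter than column `2j`. Inside the Durfee square the column lengths are `αᵢ + i + 1`, so the
pairing there says `α_{2j} = α_{2j+1} + 1`, and an odd `p` is impossible because the last column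
of the square is longer than `p` while the next one is not. Below the square rows have length at
most `p`, so an odd row there would again separate two paired columns `2j < 2j+1 < p`.
-/

namespace YoungDiagram

variable (μ : YoungDiagram)

theorem rowLen_eq_succ_iff {r j : ℕ} :
    μ.rowLen r = j + 1 ↔ r < μ.colLen j ∧ μ.colLen (j + 1) ≤ r := by
  rw [← mem_iff_lt_colLen, ← not_lt, ← mem_iff_lt_colLen, mem_iff_lt_rowLen, mem_iff_lt_rowLen]
  omega

theorem colLen_two_mul_add_one_eq_of_even_rowLen (heven : ∀ i, Even (μ.rowLen i)) (j : ℕ) :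
    μ.colLen (2 * j + 1) = μ.colLen (2 * j) := by
  refine le_antisymm (μ.colLen_anti _ _ (by omega)) (not_lt.1 fun hlt => ?_)
  have hrow : μ.rowLen (μ.colLen (2 * j + 1)) = 2 * j + 1 :=
    (μ.rowLen_eq_succ_iff).2 ⟨hlt, le_rfl⟩
  have := heven (μ.colLen (2 * j + 1))
  rw [hrow, Nat.even_add_one] at this
  exact this (even_two_mul j)

theorem rowLen_le_of_notMem {p r : ℕ} (hdur : (p, p) ∉ μ) (hr : p ≤ r) : μ.rowLen r ≤ p :=
  (μ.rowLen_anti p r hr).trans (not_lt.1 (mem_iff_lt_rowLen.not.1 hdur))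

end YoungDiagram

section Frobenius

variable {p : ℕ} {α : Fin p → ℕ} {μ : YoungDiagram}

theorem colLen_two_mul_add_one_eq_iff (hcol : ∀ i : Fin p, μ.colLen i = α i + i + 1) {j : ℕ}
    (h : 2 * j + 1 < p) :
    μ.colLen (2 * j + 1) = μ.colLen (2 * j) ↔
      α ⟨2 * j, Nat.lt_of_succ_lt h⟩ = α ⟨2 * j + 1, h⟩ + 1 := by
  have h0 : μ.colLen (2 * j) = α ⟨2 * j, _⟩ + 2 * j + 1 := hcol ⟨2 * j, Nat.lt_of_succ_lt h⟩
  have h1 : μ.colLen (2 * j + 1) = α ⟨2 * j + 1, h⟩ + (2 * j + 1) + 1 := hcol ⟨_, h⟩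
  omega

theorem even_rowLen_of_alpha_paired (hdur : (p, p) ∉ μ)
    (hrow : ∀ i : Fin p, μ.rowLen i = α i + i) (hcol : ∀ i : Fin p, μ.colLen i = α i + i + 1)
    (hp : Even p) (hev : ∀ i : Fin p, Even (i : ℕ) → Even (α i))
    (hpair : ∀ j : ℕ, ∀ h : 2 * j + 1 < p,
      α ⟨2 * j, Nat.lt_of_succ_lt h⟩ = α ⟨2 * j + 1, h⟩ + 1)
    (r : ℕ) : Even (μ.rowLen r) := by
  by_cases hr : r < p
  · have hr_len : μ.rowLen r = α ⟨r, hr⟩ + r := hrow ⟨r, hr⟩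
    rcases Nat.even_or_odd r with hr_even | ⟨j, rfl⟩
    · exact hr_len ▸ (hev ⟨r, hr⟩ hr_even).add hr_even
    · have hα := hev ⟨2 * j, by omega⟩ (even_two_mul j)
      rw [hpair j hr, Nat.even_iff] at hα
      rw [hr_len, Nat.even_iff]
      omega
  · by_contra hodd
    obtain ⟨j, hj⟩ := Nat.not_even_iff_odd.1 hodd
    have hle := μ.rowLen_le_of_notMem hdur (not_lt.1 hr)
    have hjp : 2 * j + 1 < p := by rw [Nat.even_iff] at hp; omega
    obtain ⟨hlt, hge⟩ := (μ.rowLen_eq_succ_iff).1 hj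
    have hpaired := (colLen_two_mul_add_one_eq_iff hcol hjp).2 (hpair j hjp)
    omega

end Frobenius

/-- a partition `λ = (α₁−1, …, α_p−1 | α₁, …, α_p)` in Frobenius notation
(with `α₁ > ⋯ > α_p > 0`, realized as a Young diagram `μ` with Durfee square of size
`p`, 0-based row lengths `α i + i` and column lengths `α i + i + 1`) is even (all parts
even) if and only if `p` is even, `α₁, α₃, …, α_{p−1}` (0-based: the `α` at even
indices) are all even, and `α_{2i−1} − α_{2i} = 1` for all `i = 1, …, p/2`. -/
theorem frobenius_leg_plus_one_even_iff (p : ℕ) (α : Fin p → ℕ)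
    (hpos : ∀ i, 0 < α i) (μ : YoungDiagram)
    (hdur : (p, p) ∉ μ)
    (hrow : ∀ i : Fin p, μ.rowLen i = α i + i)
    (hcol : ∀ i : Fin p, μ.colLen i = α i + i + 1) :
    (∀ i : ℕ, Even (μ.rowLen i)) ↔
      (Even p ∧ (∀ i : Fin p, Even (i : ℕ) → Even (α i)) ∧
        (∀ j : ℕ, ∀ h : 2 * j + 1 < p, α ⟨2 * j, by omega⟩ = α ⟨2 * j + 1, h⟩ + 1)) := by
  refine ⟨fun heven => ⟨?_, ?_, ?_⟩, fun ⟨hp, hev, hpair⟩ =>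
    even_rowLen_of_alpha_paired hdur hrow hcol hp hev hpair⟩
  · by_contra hodd
    obtain ⟨j, rfl⟩ := Nat.not_even_iff_odd.1 hodd
    have hpaired := μ.colLen_two_mul_add_one_eq_of_even_rowLen heven j
    have hshort : μ.colLen (2 * j + 1) ≤ 2 * j + 1 :=
      not_lt.1 (YoungDiagram.mem_iff_lt_colLen.not.1 hdur)
    have hlong : μ.colLen (2 * j) = α ⟨2 * j, by omega⟩ + 2 * j + 1 := hcol ⟨2 * j, by omega⟩
    have := hpos ⟨2 * j, by omega⟩
    omega
  · intro i hi
    have := heven i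
    rw [hrow i] at this
    exact (Nat.even_add.1 this).2 hi
  · exact fun j hj =>
      (colLen_two_mul_add_one_eq_iff hcol hj).1 (μ.colLen_two_mul_add_one_eq_of_even_rowLen heven j)
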